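/- Let ℓ : ℝ^{d×m} → ℝ be twice continuously differentiable, let λ ≠ 0 be a real number, and define the reparameterized loss ℓ'(V) := ℓ(λ⁻¹ V). Define the simplified relative flatness measure of a loss g at W by κ̂_g(W) = ‖W‖² · Σ_{s=1}^d Σ_{t=1}^m ∂²g(W)/∂w_{s,t}², where ‖W‖² is the squared Frobenius norm of W and the second factor is the trace of the full Hessian of g at W. Then κ̂ is invariant under this reparameterization: κ̂_{ℓ'}(λW) = κ̂_ℓ(W) for all W ∈ ℝ^{d×m}. -/

import Mathlib

open scoped BigOperators

/-- Second partial derivative of `f : ℝ^{d×m} → ℝ` with respect to the entries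
`(s,t)` (outer) and `(s',t')` (inner) of the weight matrix. -/
noncomputable def pderiv2 {d m : ℕ} (f : (Fin d → Fin m → ℝ) → ℝ)
    (W : Fin d → Fin m → ℝ) (s : Fin d) (t : Fin m) (s' : Fin d) (t' : Fin m) : ℝ :=
  fderiv ℝ (fun V => fderiv ℝ f V (Pi.single s' (Pi.single t' 1))) W
    (Pi.single s (Pi.single t 1))

/-- The simplified relative flatness measure of a loss `g : ℝ^{d×m} → ℝ` at `W`:
`κ̂_g(W) = ‖W‖²_F · Tr(H)`, where `‖W‖²_F = Σ_{s,t} W_{s,t}²` is the squared Frobenius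
norm and `Tr(H) = Σ_{s,t} ∂²g(W)/∂w_{s,t}²` is the trace of the full Hessian. -/
noncomputable def kappaHat {d m : ℕ} (g : (Fin d → Fin m → ℝ) → ℝ)
    (W : Fin d → Fin m → ℝ) : ℝ :=
  (∑ s, ∑ t, (W s t) ^ 2) * (∑ s, ∑ t, pderiv2 g W s t s t)

theorem fderiv_fderiv_apply_comp_smul {𝕜 E F : Type*} [NontriviallyNormedField 𝕜]
    [NormedAddCommGroup E] [NormedSpace 𝕜 E] [NormedAddCommGroup F] [NormedSpace 𝕜 F]
    (f : E → F) (c : 𝕜) (x u v : E) :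
    fderiv 𝕜 (fun y => fderiv 𝕜 (fun z => f (c • z)) y v) x u
      = c ^ 2 • fderiv 𝕜 (fun y => fderiv 𝕜 f y v) (c • x) u := by
  have inner : (fun y => fderiv 𝕜 (fun z => f (c • z)) y v)
      = c • fun y => fderiv 𝕜 f (c • y) v := by
    ext y
    simp only [fderiv_comp_smul, smul_apply, Pi.smul_apply]
  rw [inner, fderiv_const_smul_field, Pi.smul_apply,
    fderiv_comp_smul (f := fun y => fderiv 𝕜 f y v), smul_apply, smul_apply, smul_smul, sq]

theorem pderiv2_comp_smul {d m : ℕ} (f : (Fin d → Fin m → ℝ) → ℝ) (c : ℝ)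
    (W : Fin d → Fin m → ℝ) (s : Fin d) (t : Fin m) (s' : Fin d) (t' : Fin m) :
    pderiv2 (fun V => f (c • V)) W s t s' t' = c ^ 2 * pderiv2 f (c • W) s t s' t' :=
  fderiv_fderiv_apply_comp_smul f c W _ _

/-- The factor `c ^ 2` picked up by the Hessian trace is the one by which `‖c • W‖²` exceeds
`‖W‖²`. -/
theorem kappaHat_comp_smul {d m : ℕ} (f : (Fin d → Fin m → ℝ) → ℝ) (c : ℝ)
    (W : Fin d → Fin m → ℝ) :
    kappaHat (fun V => f (c • V)) W = kappaHat f (c • W) := by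
  simp only [kappaHat, pderiv2_comp_smul, ← Finset.mul_sum, Pi.smul_apply, smul_eq_mul, mul_pow]
  ring

theorem statement9_general {d m : ℕ} (ℓ : (Fin d → Fin m → ℝ) → ℝ)
    (lam : ℝ) (hlam : lam ≠ 0)
    (ℓ' : (Fin d → Fin m → ℝ) → ℝ) (hℓ' : ∀ V, ℓ' V = ℓ (lam⁻¹ • V)) :
    ∀ W : Fin d → Fin m → ℝ, kappaHat ℓ' (lam • W) = kappaHat ℓ W := by
  intro W
  rw [funext hℓ', kappaHat_comp_smul, smul_smul, inv_mul_cancel₀ hlam, one_smul]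

/-- the simplified relative flatness measure is invariant under the
layer-wise reparameterization `W ↦ λW`, `ℓ ↦ ℓ'` with `ℓ'(V) := ℓ(λ⁻¹ V)` for `λ ≠ 0`:
`κ̂_{ℓ'}(λW) = κ̂_ℓ(W)`. -/
theorem statement9 {d m : ℕ} (ℓ : (Fin d → Fin m → ℝ) → ℝ)
    (hℓ : ContDiff ℝ 2 ℓ) (lam : ℝ) (hlam : lam ≠ 0)
    (ℓ' : (Fin d → Fin m → ℝ) → ℝ) (hℓ' : ∀ V, ℓ' V = ℓ (lam⁻¹ • V)) :
    ∀ W : Fin d → Fin m → ℝ, kappaHat ℓ' (lam • W) = kappaHat ℓ W :=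
  statement9_general ℓ lam hlam ℓ' hℓ'
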